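/- arXiv:2209.10825 — 6 statements merged into one kernel-verified Lean document; each statement's English description precedes it below -/
import Mathlib

section
/- Suppose F : X × Y → ℝ with X ⊆ ℝ^n closed convex, F(·, y) is L-weakly convex on X for each y ∈ Y, F(x, ·) is concave on the convex set Y, and ∇_y F is L-Lipschitz jointly in (x, y). Let r > L and x_r(y, z) = argmin_{x ∈ X} {F(x, y) + (r/2)‖x − z‖²}. Then for any z and y, y′ ∈ Y: ‖x_r(y, z) − x_r(y′, z)‖ ≤ (2(r+L)/(r−L))‖y − y′‖. -/
/-!
For each `w`, the proximal objective `φ_w x = F x w + r/2 ‖x - z‖²` is `(r - L)`-strongly convex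
on `X`, so its minimiser `x_w` has quadratic growth: `φ_w x_w + (r - L)/2 ‖x - x_w‖² ≤ φ_w x`.
Adding the growth inequalities for `(y, x1)` and `(y', x2)` cancels the `z`-terms and leaves
`(r - L) ‖x1 - x2‖² ≤ F x2 y - F x2 y' + F x1 y' - F x1 y`. Concavity in the second variable bounds
the right side by `⟪∇_y F (x2, y') - ∇_y F (x1, y), y - y'⟫ ≤ L ‖(x1 - x2, y - y')‖ ‖y - y'‖`,
and this quadratic inequality in `‖x1 - x2‖` solves to the claimed bound.
-/

open scoped RealInnerProductSpace

open Filter Topology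

section

variable {E : Type*} [NormedAddCommGroup E] [NormedSpace ℝ E]

theorem ConcaveOn.le_add_of_hasFDerivAt {s : Set E} {f : E → ℝ} {f' : E →L[ℝ] ℝ} {x y : E}
    (hf : ConcaveOn ℝ s f) (hx : x ∈ s) (hy : y ∈ s) (hf' : HasFDerivAt f f' x) :
    f y ≤ f x + f' (y - x) := by
  set ℓ : ℝ →ᵃ[ℝ] E := AffineMap.lineMap x y
  have hline : ConcaveOn ℝ (ℓ ⁻¹' s) (f ∘ ℓ) := hf.comp_affineMap ℓ
  have hderiv : HasDerivAt (f ∘ ℓ) (f' (y - x)) 0 := by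
    have hf'ℓ : HasFDerivAt f f' (ℓ 0) := by simpa [ℓ] using hf'
    exact hf'ℓ.comp_hasDerivAt 0 AffineMap.hasDerivAt_lineMap
  have hslope : f y - f x ≤ f' (y - x) := by
    simpa [ℓ, slope_def_field] using hline.slope_le_of_hasDerivAt (x := 0) (y := 1)
      (by simpa [ℓ] using hx) (by simpa [ℓ] using hy) zero_lt_one hderiv
  linarith

theorem StrongConvexOn.add_mul_sq_le_of_isMinOn {s : Set E} {f : E → ℝ} {m : ℝ} {x₀ x : E}
    (hf : StrongConvexOn s m f) (hx₀ : x₀ ∈ s) (hmin : IsMinOn f s x₀) (hx : x ∈ s) :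
    f x₀ + m / 2 * ‖x - x₀‖ ^ 2 ≤ f x := by
  set c := m / 2 * ‖x - x₀‖ ^ 2 with hc
  have hsegment : ∀ t ∈ Set.Ioc (0 : ℝ) 1, f x₀ + (1 - t) * c ≤ f x := by
    rintro t ⟨ht₀, ht₁⟩
    have hconv := hf.2 hx hx₀ ht₀.le (sub_nonneg.2 ht₁) (add_sub_cancel t 1)
    have hle := isMinOn_iff.1 hmin _ (hf.1 hx hx₀ ht₀.le (sub_nonneg.2 ht₁) (add_sub_cancel t 1))
    simp only [smul_eq_mul, ← hc] at hconv
    refine le_of_mul_le_mul_left ?_ ht₀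
    linarith
  have hlim : Tendsto (fun t : ℝ => f x₀ + (1 - t) * c) (𝓝[>] 0) (𝓝 (f x₀ + c)) := by
    have hcont : Continuous fun t : ℝ => f x₀ + (1 - t) * c := by fun_prop
    simpa using (hcont.tendsto 0).mono_left nhdsWithin_le_nhds
  exact le_of_tendsto hlim (eventually_of_mem (Ioc_mem_nhdsGT zero_lt_one) hsegment)

end

section

variable {E : Type*} [NormedAddCommGroup E] [InnerProductSpace ℝ E]

theorem StrongConvexOn.add_half_mul_norm_sub_sq {s : Set E} {f : E → ℝ} {m : ℝ}
    (hf : StrongConvexOn s m f) (r : ℝ) (z : E) :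
    StrongConvexOn s (m + r) fun x => f x + r / 2 * ‖x - z‖ ^ 2 := by
  rw [strongConvexOn_iff_convex] at hf ⊢
  have haff : ConvexOn ℝ s fun x => -r * ⟪x, z⟫ + r / 2 * ‖z‖ ^ 2 :=
    ((-r • (innerₛₗ ℝ z)).convexOn hf.1).add_const (r / 2 * ‖z‖ ^ 2) |>.congr fun x _ => by
      simp [real_inner_comm]
  refine (hf.add haff).congr fun x _ => ?_
  rw [Pi.add_apply, norm_sub_sq_real]
  ring

end

theorem le_mul_of_sub_mul_sq_le_mul_sqrt {a b L r : ℝ} (ha : 0 ≤ a) (hb : 0 ≤ b) (hr : L < r)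
    (h : (r - L) * a ^ 2 ≤ L * √(a ^ 2 + b ^ 2) * b) :
    a ≤ 2 * (r + L) / (r - L) * b := by
  rw [div_mul_eq_mul_div, le_div_iff₀ (sub_pos.2 hr)]
  rcases hb.eq_or_lt with rfl | hb
  · nlinarith [sq_nonneg a]
  have hsqrt : √(a ^ 2 + b ^ 2) ≤ a + b :=
    Real.sqrt_le_iff.2 ⟨by positivity, by nlinarith⟩
  have hL : 0 ≤ L := by
    by_contra! hL
    have : 0 < √(a ^ 2 + b ^ 2) := Real.sqrt_pos.2 (by positivity)
    nlinarith [mul_pos (mul_pos (neg_pos.2 hL) this) hb]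
  nlinarith [mul_le_mul_of_nonneg_left hsqrt (mul_nonneg hL hb.le)]

theorem prox_map_lipschitz_in_y_general (n d : ℕ) (X : Set (EuclideanSpace ℝ (Fin n)))
    (Y : Set (EuclideanSpace ℝ (Fin d)))
    (F : EuclideanSpace ℝ (Fin n) → EuclideanSpace ℝ (Fin d) → ℝ)
    (Gy : EuclideanSpace ℝ (Fin n) → EuclideanSpace ℝ (Fin d) → EuclideanSpace ℝ (Fin d))
    (L r : ℝ) (y y' : EuclideanSpace ℝ (Fin d)) (z x1 x2 : EuclideanSpace ℝ (Fin n))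
    (hwc : ∀ y ∈ Y, ConvexOn ℝ X (fun x => F x y + L / 2 * ‖x‖ ^ 2))
    (hconc : ∀ x ∈ X, ConcaveOn ℝ Y (fun y => F x y))
    (hgrad : ∀ x y, HasGradientAt (F x) (Gy x y) y)
    (hlip : ∀ x x' y y', ‖Gy x y - Gy x' y'‖ ≤ L * Real.sqrt (‖x - x'‖ ^ 2 + ‖y - y'‖ ^ 2))
    (hr : L < r) (hy : y ∈ Y) (hy' : y' ∈ Y)
    (hx1 : x1 ∈ X) (hmin1 : IsMinOn (fun x => F x y + r / 2 * ‖x - z‖ ^ 2) X x1)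
    (hx2 : x2 ∈ X) (hmin2 : IsMinOn (fun x => F x y' + r / 2 * ‖x - z‖ ^ 2) X x2) :
    ‖x1 - x2‖ ≤ 2 * (r + L) / (r - L) * ‖y - y'‖ := by
  have hstrong : ∀ w ∈ Y, StrongConvexOn X (r - L) fun x => F x w + r / 2 * ‖x - z‖ ^ 2 := by
    intro w hw
    have hweak : StrongConvexOn X (-L) (F · w) := by
      simpa only [strongConvexOn_iff_convex, neg_div, neg_mul, sub_neg_eq_add] using hwc w hw
    simpa [neg_add_eq_sub] using hweak.add_half_mul_norm_sub_sq r z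
  have hgrowth1 := (hstrong y hy).add_mul_sq_le_of_isMinOn hx1 hmin1 hx2
  have hgrowth2 := (hstrong y' hy').add_mul_sq_le_of_isMinOn hx2 hmin2 hx1
  have hsup1 := (hconc x2 hx2).le_add_of_hasFDerivAt hy' hy (hgrad x2 y').hasFDerivAt
  have hsup2 := (hconc x1 hx1).le_add_of_hasFDerivAt hy hy' (hgrad x1 y).hasFDerivAt
  simp only [InnerProductSpace.toDual_apply_apply] at hsup1 hsup2
  have hcross : ⟪Gy x2 y' - Gy x1 y, y - y'⟫ ≤ L * √(‖x1 - x2‖ ^ 2 + ‖y - y'‖ ^ 2) * ‖y - y'‖ := by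
    refine (real_inner_le_norm _ _).trans (mul_le_mul_of_nonneg_right ?_ (norm_nonneg _))
    simpa only [norm_sub_rev x2 x1, norm_sub_rev y' y] using hlip x2 x1 y' y
  have hgap : (r - L) * ‖x1 - x2‖ ^ 2 ≤ ⟪Gy x2 y' - Gy x1 y, y - y'⟫ := by
    rw [← neg_sub y y', inner_neg_right] at hsup2
    rw [norm_sub_rev x2 x1] at hgrowth1
    rw [inner_sub_left]
    linarith
  exact le_mul_of_sub_mul_sq_le_mul_sqrt (norm_nonneg _) (norm_nonneg _) hr (hgap.trans hcross)

/-- Lipschitz continuity in `y` of the proximal map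
`x_r(y, z) = argmin_{x ∈ X} { F(x,y) + (r/2)‖x - z‖² }`:
`‖x_r(y,z) - x_r(y',z)‖ ≤ 2(r+L)/(r-L) ‖y - y'‖`. -/
theorem prox_map_lipschitz_in_y (n d : ℕ) (X : Set (EuclideanSpace ℝ (Fin n)))
    (Y : Set (EuclideanSpace ℝ (Fin d)))
    (F : EuclideanSpace ℝ (Fin n) → EuclideanSpace ℝ (Fin d) → ℝ)
    (Gy : EuclideanSpace ℝ (Fin n) → EuclideanSpace ℝ (Fin d) → EuclideanSpace ℝ (Fin d))
    (L r : ℝ) (y y' : EuclideanSpace ℝ (Fin d)) (z x1 x2 : EuclideanSpace ℝ (Fin n))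
    (hX : IsClosed X) (hXc : Convex ℝ X) (hYc : Convex ℝ Y)
    (hwc : ∀ y ∈ Y, ConvexOn ℝ X (fun x => F x y + L / 2 * ‖x‖ ^ 2))
    (hconc : ∀ x ∈ X, ConcaveOn ℝ Y (fun y => F x y))
    (hgrad : ∀ x y, HasGradientAt (F x) (Gy x y) y)
    (hlip : ∀ x x' y y', ‖Gy x y - Gy x' y'‖ ≤ L * Real.sqrt (‖x - x'‖ ^ 2 + ‖y - y'‖ ^ 2))
    (hr : L < r) (hy : y ∈ Y) (hy' : y' ∈ Y)
    (hx1 : x1 ∈ X) (hmin1 : IsMinOn (fun x => F x y + r / 2 * ‖x - z‖ ^ 2) X x1)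
    (hx2 : x2 ∈ X) (hmin2 : IsMinOn (fun x => F x y' + r / 2 * ‖x - z‖ ^ 2) X x2) :
    ‖x1 - x2‖ ≤ 2 * (r + L) / (r - L) * ‖y - y'‖ :=
  prox_map_lipschitz_in_y_general n d X Y F Gy L r y y' z x1 x2 hwc hconc hgrad hlip hr hy hy' hx1
    hmin1 hx2 hmin2
end

section
/- Let Y ⊆ ℝ^d be closed convex, g : ℝ^d → ℝ differentiable, α > 0, y ∈ Y, and y⁺ = proj_Y(y + α∇g(y)). If α ≤ 1, then ‖y − y⁺‖ ≤ dist(0, −∇g(y) + N_Y(y)), where N_Y(y) is the normal cone of Y at y. -/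
open scoped RealInnerProductSpace

/-- The projected-gradient residual is bounded by the stationarity measure:
if `α ≤ 1` and `y⁺ = proj_Y(y + α∇g(y))`, then
`‖y - y⁺‖ ≤ dist(0, -∇g(y) + N_Y(y))`. -/
theorem residual_le_stationarity_measure (d : ℕ)
    (Y : Set (EuclideanSpace ℝ (Fin d)))
    (g : EuclideanSpace ℝ (Fin d) → ℝ)
    (G : EuclideanSpace ℝ (Fin d) → EuclideanSpace ℝ (Fin d))
    (α : ℝ) (y yplus : EuclideanSpace ℝ (Fin d))
    (hY : IsClosed Y) (hYc : Convex ℝ Y) (hα : 0 < α) (hα1 : α ≤ 1)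
    (hgrad : ∀ u, HasGradientAt g (G u) u)
    (hy : y ∈ Y) (hyp : yplus ∈ Y)
    (hproj : ∀ w ∈ Y, ⟪y + α • G y - yplus, w - yplus⟫ ≤ 0) :
    ‖y - yplus‖ ≤ Metric.infDist 0
      {u : EuclideanSpace ℝ (Fin d) |
        ∃ v, (∀ w ∈ Y, ⟪v, w - y⟫ ≤ 0) ∧ u = -G y + v} := by
  set S : Set (EuclideanSpace ℝ (Fin d)) :=
    {u : EuclideanSpace ℝ (Fin d) |
      ∃ v, (∀ w ∈ Y, ⟪v, w - y⟫ ≤ 0) ∧ u = -G y + v}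
  have hSne : S.Nonempty := ⟨-G y, 0, fun w hw => by simp, by simp⟩
  refine le_of_not_gt fun hlt => ?_
  obtain ⟨u, huS, hd⟩ := (Metric.infDist_lt_iff hSne).1 hlt
  refine absurd hd (not_lt.2 ?_)
  obtain ⟨v, hv, rfl⟩ := huS
  rw [dist_zero_left]
  -- key inequality
  have h1 : ⟪y + α • G y - yplus, y - yplus⟫ ≤ 0 := hproj y hy
  have h2 : ⟪v, yplus - y⟫ ≤ 0 := hv yplus hyp
  have hexp : ‖y - yplus‖ ^ 2 ≤ α * ⟪G y - v, yplus - y⟫ := by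
    have e1 : ⟪y + α • G y - yplus, y - yplus⟫
        = ‖y - yplus‖ ^ 2 + α * ⟪G y, y - yplus⟫ := by
      have : y + α • G y - yplus = (y - yplus) + α • G y := by abel
      rw [this, inner_add_left, real_inner_smul_left, real_inner_self_eq_norm_sq]
    have e2 : α * ⟪G y - v, yplus - y⟫
        = -(α * ⟪G y, y - yplus⟫) - α * ⟪v, yplus - y⟫ := by
      rw [inner_sub_left]
      have : ⟪G y, yplus - y⟫ = -⟪G y, y - yplus⟫ := by
        rw [← inner_neg_right]; congr 1; abel
      rw [this]; ring
    nlinarith [mul_nonpos_of_nonneg_of_nonpos hα.le h2]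
  have hcs : ⟪G y - v, yplus - y⟫ ≤ ‖G y - v‖ * ‖y - yplus‖ := by
    calc ⟪G y - v, yplus - y⟫ ≤ ‖G y - v‖ * ‖yplus - y‖ := real_inner_le_norm _ _
    _ = ‖G y - v‖ * ‖y - yplus‖ := by rw [norm_sub_rev yplus y]
  have hGv : ‖(-G y + v : EuclideanSpace ℝ (Fin d))‖ = ‖G y - v‖ := by
    rw [← norm_neg]; congr 1; abel
  rw [hGv]
  by_cases h0 : ‖y - yplus‖ = 0
  · rw [h0]; exact norm_nonneg _
  · have hpos : 0 < ‖y - yplus‖ := lt_of_le_of_ne (norm_nonneg _) (Ne.symm h0)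
    have : ‖y - yplus‖ ^ 2 ≤ α * (‖G y - v‖ * ‖y - yplus‖) := by
      refine hexp.trans ?_
      exact mul_le_mul_of_nonneg_left hcs hα.le
    nlinarith [norm_nonneg (G y - v),
      mul_le_mul_of_nonneg_right hα1 (mul_nonneg (norm_nonneg (G y - v)) hpos.le)]
end

section
/- For F(x, y) = x·y on X × Y = ℝ × [−1, 1], the unique game stationary point is (0, 0), whereas the set of global minimax points {(x*, y*) : F(x*, y) ≤ F(x*, y*) ≤ max_{y′ ∈ [−1,1]} F(x, y′) for all (x, y) ∈ ℝ × [−1,1]} equals {0} × [−1, 1]. In particular, there exist minimax points that are not game stationary. -/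
lemma ssup_mul_Icc (x : ℝ) : sSup ((fun y' => x * y') '' Set.Icc (-1 : ℝ) 1) = |x| := by
  apply IsGreatest.csSup_eq
  constructor
  · rcases le_or_gt 0 x with h | h
    · exact ⟨1, by norm_num, by simp [abs_of_nonneg h]⟩
    · exact ⟨-1, by norm_num, by rw [abs_of_neg h]; ring⟩
  · rintro z ⟨y, ⟨hy1, hy2⟩, rfl⟩
    calc x * y ≤ |x * y| := le_abs_self _
      _ = |x| * |y| := abs_mul x y
      _ ≤ |x| * 1 := by
          apply mul_le_mul_of_nonneg_left _ (abs_nonneg x)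
          exact abs_le.mpr ⟨hy1, hy2⟩
      _ = |x| := mul_one _

/-- For `F(x,y) = x·y` on `ℝ × [-1,1]`: the unique game stationary point is `(0,0)`,
the set of global minimax points is `{0} × [-1,1]`, and hence there is a minimax point
that is not game stationary. -/
theorem minimax_vs_game_stationary_example :
    {p : ℝ × ℝ | p.2 ∈ Set.Icc (-1 : ℝ) 1 ∧ p.2 = 0 ∧
        (∃ v : ℝ, (∀ w ∈ Set.Icc (-1 : ℝ) 1, v * (w - p.2) ≤ 0) ∧ -p.1 + v = 0)} =
      {((0 : ℝ), (0 : ℝ))} ∧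
    {p : ℝ × ℝ | p.2 ∈ Set.Icc (-1 : ℝ) 1 ∧
        (∀ y ∈ Set.Icc (-1 : ℝ) 1, p.1 * y ≤ p.1 * p.2) ∧
        (∀ x : ℝ, p.1 * p.2 ≤ sSup ((fun y' => x * y') '' Set.Icc (-1 : ℝ) 1))} =
      {(0 : ℝ)} ×ˢ Set.Icc (-1 : ℝ) 1 ∧
    ∃ p : ℝ × ℝ,
      (p.2 ∈ Set.Icc (-1 : ℝ) 1 ∧
        (∀ y ∈ Set.Icc (-1 : ℝ) 1, p.1 * y ≤ p.1 * p.2) ∧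
        (∀ x : ℝ, p.1 * p.2 ≤ sSup ((fun y' => x * y') '' Set.Icc (-1 : ℝ) 1))) ∧
      ¬(p.2 ∈ Set.Icc (-1 : ℝ) 1 ∧ p.2 = 0 ∧
        (∃ v : ℝ, (∀ w ∈ Set.Icc (-1 : ℝ) 1, v * (w - p.2) ≤ 0) ∧ -p.1 + v = 0)) := by
  refine ⟨?_, ?_, ?_⟩
  · ext ⟨x, y⟩
    simp only [Set.mem_setOf_eq, Set.mem_singleton_iff, Prod.mk.injEq]
    constructor
    · rintro ⟨hy, rfl, v, hv, hxv⟩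
      have h1 := hv 1 (by norm_num)
      have h2 := hv (-1) (by norm_num)
      have : v = 0 := by nlinarith
      exact ⟨by linarith, rfl⟩
    · rintro ⟨rfl, rfl⟩
      exact ⟨by norm_num, rfl, 0, fun w _ => by norm_num, by norm_num⟩
  · ext ⟨x, y⟩
    simp only [Set.mem_setOf_eq, Set.mem_prod, Set.mem_singleton_iff]
    constructor
    · rintro ⟨hy, h1, h2⟩
      have h3 := h2 0
      rw [ssup_mul_Icc] at h3
      simp at h3
      have ha := h1 1 (by norm_num)
      have hb := h1 (-1) (by norm_num)
      constructor
      · rcases le_or_gt 0 x with h | h <;> nlinarith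
      · exact hy
    · rintro ⟨rfl, hy⟩
      refine ⟨hy, fun y' _ => by norm_num, fun x => ?_⟩
      rw [ssup_mul_Icc]
      simpa using abs_nonneg x
  · refine ⟨(0, 1), ⟨by norm_num, fun y' _ => by norm_num, fun x => ?_⟩, by norm_num⟩
    rw [ssup_mul_Icc]
    simpa using abs_nonneg x
end

section
/- Let r > L and suppose F(·, y) is L-weakly convex on closed convex X for each y, and F(x, ·) is concave and continuous on compact convex Y. Define the primal update x^{k+1} = argmin_{x ∈ X}{F_{x^k,λ}(x, y^k) + (r/2)‖x − z^k‖²}, where F_{x̄,λ}(x, y) = h_y(c_y(x̄) + ∇c_y(x̄)ᵀ(x − x̄)) + (λ/2)‖x − x̄‖² is the proximal-linear model, and let x_r(y^k, z^k) = argmin_{x ∈ X}{F(x, y^k) + (r/2)‖x − z^k‖²}. Then ‖x^{k+1} − x_r(y^k, z^k)‖ ≤ ζ‖x^k − x^{k+1}‖ with ζ = (2(r−L)^{−1} + (λ+L)^{−1})/((λ+L)^{−1}) · (√(2L/(λ+L)) + 1). -/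
/-!
Since `F(·, y)` stays within `L/2 ‖x - w‖²` of its convex linearized model at every `w`, it is
`L`-weakly convex; hence the exact proximal objective is `(r - L)`-strongly convex and the
prox-linear objective is `(λ + r)`-strongly convex. Evaluating the quadratic growth of each
objective at the other's minimizer and passing between the two objectives with the two-sided model
bound gives `(r - L) D² ≤ (λ + L) D e + L e²` for `D = ‖x^{k+1} - x_r‖`, `e = ‖x^k - x^{k+1}‖`,
whence `D ≤ (2 (λ + L)/(r - L) + 1) e ≤ ζ e`.
-/

open scoped RealInnerProductSpace
open Set Filter Topology

section NormedSpace

variable {E F : Type*} [NormedAddCommGroup E] [NormedSpace ℝ E]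
  [NormedAddCommGroup F] [NormedSpace ℝ F] {X : Set E} {f g : E → ℝ} {m n : ℝ}

/-- Along `t ↦ a + t • (b - a)` the linearization error has derivative of norm at most
`Lc ‖b - a‖² t`, which integrates to `Lc ‖b - a‖² / 2`. -/
theorem Convex.norm_image_sub_sub_le_of_lipschitz_hasFDerivAt (hX : Convex ℝ X)
    {c : E → F} {c' : E → E →L[ℝ] F} {Lc : ℝ} (hc : ∀ x ∈ X, HasFDerivAt c (c' x) x)
    (hc' : ∀ x ∈ X, ∀ x' ∈ X, ‖c' x - c' x'‖ ≤ Lc * ‖x - x'‖) {a b : E}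
    (ha : a ∈ X) (hb : b ∈ X) :
    ‖c b - c a - c' a (b - a)‖ ≤ Lc / 2 * ‖b - a‖ ^ 2 := by
  set v := b - a
  have hmem : ∀ t ∈ Icc (0 : ℝ) 1, a + t • v ∈ X := fun t ht => by
    convert hX ha hb (sub_nonneg.2 ht.2) ht.1 (sub_add_cancel 1 t) using 1
    module
  have hderiv : ∀ t ∈ Icc (0 : ℝ) 1, HasDerivAt (fun s : ℝ => c (a + s • v) - c a - s • c' a v)
      (c' (a + t • v) v - c' a v) t := fun t ht => by
    have hline : HasDerivAt (fun s : ℝ => a + s • v) v t := by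
      simpa using ((hasDerivAt_id t).smul_const v).const_add a
    have hlin : HasDerivAt (fun s : ℝ => s • c' a v) (c' a v) t := by
      simpa using (hasDerivAt_id t).smul_const (c' a v)
    exact (((hc _ (hmem t ht)).comp_hasDerivAt t hline).sub_const (c a)).sub hlin
  have hbound : ∀ t ∈ Ico (0 : ℝ) 1, ‖c' (a + t • v) v - c' a v‖ ≤ Lc * ‖v‖ ^ 2 * t :=
    fun t ht => calc
      ‖c' (a + t • v) v - c' a v‖ ≤ ‖c' (a + t • v) - c' a‖ * ‖v‖ :=
        (c' (a + t • v) - c' a).le_opNorm v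
      _ ≤ Lc * ‖a + t • v - a‖ * ‖v‖ := by
        gcongr; exact hc' _ (hmem t (Ico_subset_Icc_self ht)) a ha
      _ = Lc * ‖v‖ ^ 2 * t := by
        rw [add_sub_cancel_left, norm_smul, Real.norm_of_nonneg ht.1]; ring
  have hB : ∀ t, HasDerivAt (fun s : ℝ => Lc * ‖v‖ ^ 2 * (s ^ 2 / 2)) (Lc * ‖v‖ ^ 2 * t) t :=
    fun t => by simpa using ((hasDerivAt_pow 2 t).div_const 2).const_mul (Lc * ‖v‖ ^ 2)
  have key := image_norm_le_of_norm_deriv_right_le_deriv_boundary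
    (fun t ht => (hderiv t ht).continuousAt.continuousWithinAt)
    (fun t ht => (hderiv t (Ico_subset_Icc_self ht)).hasDerivWithinAt) (by simp) hB hbound
    (right_mem_Icc.2 zero_le_one)
  convert key using 1
  · simp [v]
  · ring

theorem abs_comp_sub_comp_linearization_le (hX : Convex ℝ X) {h : F → ℝ} {Lh : ℝ}
    (hh : ∀ u u', |h u - h u'| ≤ Lh * ‖u - u'‖) (hLh : 0 ≤ Lh)
    {c : E → F} {c' : E → E →L[ℝ] F} {Lc : ℝ} (hc : ∀ x ∈ X, HasFDerivAt c (c' x) x)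
    (hc' : ∀ x ∈ X, ∀ x' ∈ X, ‖c' x - c' x'‖ ≤ Lc * ‖x - x'‖) {w x : E}
    (hw : w ∈ X) (hx : x ∈ X) :
    |h (c x) - h (c w + c' w (x - w))| ≤ Lh * Lc / 2 * ‖x - w‖ ^ 2 := calc
  |h (c x) - h (c w + c' w (x - w))| ≤ Lh * ‖c x - c w - c' w (x - w)‖ := by
    simpa only [sub_add_eq_sub_sub] using hh (c x) (c w + c' w (x - w))
  _ ≤ Lh * (Lc / 2 * ‖x - w‖ ^ 2) := by
    gcongr; exact hX.norm_image_sub_sub_le_of_lipschitz_hasFDerivAt hc hc' hw hx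
  _ = Lh * Lc / 2 * ‖x - w‖ ^ 2 := by ring

theorem ConvexOn.comp_add_apply_sub {h : F → ℝ} (hh : ConvexOn ℝ univ h) (u : F) (A : E →L[ℝ] F)
    (w : E) : ConvexOn ℝ univ fun x => h (u + A (x - w)) := by
  let g : E →ᵃ[ℝ] F :=
    { toFun := fun x => u + A (x - w)
      linear := A
      map_vadd' := fun p v => by
        simp only [vadd_eq_add, ContinuousLinearMap.coe_coe, add_sub_assoc, map_add]; abel }
  exact hh.comp_affineMap g

/-- A negative modulus in `StrongConvexOn` expresses weak convexity. -/
theorem strongConvexOn_neg_of_convex_model (hX : Convex ℝ X) {M : E → E → ℝ}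
    {L : ℝ} (hM : ∀ w ∈ X, ConvexOn ℝ X (M w)) (hMw : ∀ w ∈ X, f w ≤ M w w)
    (hMf : ∀ w ∈ X, ∀ x ∈ X, M w x ≤ f x + L / 2 * ‖x - w‖ ^ 2) :
    StrongConvexOn X (-L) f := by
  refine ⟨hX, fun x hx y hy a b ha hb hab => ?_⟩
  set w := a • x + b • y
  have hw : w ∈ X := hX hx hy ha hb hab
  obtain rfl : a = 1 - b := eq_sub_of_add_eq hab
  have hxw : ‖x - w‖ = b * ‖x - y‖ := by
    rw [show x - w = b • (x - y) by module, norm_smul, Real.norm_of_nonneg hb]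
  have hyw : ‖y - w‖ = (1 - b) * ‖x - y‖ := by
    rw [show y - w = (1 - b) • (y - x) by module, norm_smul, Real.norm_of_nonneg ha,
      norm_sub_rev]
  have hx' := mul_le_mul_of_nonneg_left (hMf w hw x hx) ha
  have hy' := mul_le_mul_of_nonneg_left (hMf w hw y hy) hb
  rw [hxw] at hx'
  rw [hyw] at hy'
  simp only [smul_eq_mul]
  linear_combination hMw w hw + (hM w hw).2 hx hy ha hb hab + hx' + hy'

theorem StrongConvexOn.add (hf : StrongConvexOn X m f) (hg : StrongConvexOn X n g) :
    StrongConvexOn X (m + n) (f + g) := by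
  refine (UniformConvexOn.add hf hg).mono fun r => le_of_eq ?_
  simp only [Pi.add_apply]
  ring

theorem StrongConvexOn.add_mul_norm_sub_sq_le_of_isMinOn (hf : StrongConvexOn X m f) {xs x : E}
    (hxs : xs ∈ X) (hmin : IsMinOn f X xs) (hx : x ∈ X) :
    f xs + m / 2 * ‖x - xs‖ ^ 2 ≤ f x := by
  rw [norm_sub_rev]
  set K := m / 2 * ‖xs - x‖ ^ 2
  have hsegment : ∀ t ∈ Ioc (0 : ℝ) 1, f xs + (1 - t) * K ≤ f x := fun t ht => by
    have hconv : f ((1 - t) • xs + t • x) ≤ (1 - t) * f xs + t * f x - (1 - t) * t * K :=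
      hf.2 hxs hx (sub_nonneg.2 ht.2) ht.1.le (sub_add_cancel 1 t)
    have hle : f xs ≤ f ((1 - t) • xs + t • x) :=
      hmin (hf.1 hxs hx (sub_nonneg.2 ht.2) ht.1.le (sub_add_cancel 1 t))
    have hscaled : t * (f xs + (1 - t) * K) ≤ t * f x := by linarith
    exact le_of_mul_le_mul_left hscaled ht.1
  have hlim : Tendsto (fun t : ℝ => f xs + (1 - t) * K) (𝓝[>] 0) (𝓝 (f xs + K)) := by
    have hcont : Continuous fun t : ℝ => f xs + (1 - t) * K := by fun_prop
    simpa using (hcont.tendsto 0).mono_left nhdsWithin_le_nhds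
  exact le_of_tendsto hlim (mem_of_superset (Ioc_mem_nhdsGT zero_lt_one) hsegment)

end NormedSpace

theorem le_two_mul_div_add_one_mul_of_mul_sq_le {a b D e : ℝ} (ha : 0 < a) (hb : 0 ≤ b)
    (he : 0 ≤ e) (h : a * D ^ 2 ≤ b * D * e + b * e ^ 2) :
    D ≤ (2 * b / a + 1) * e := by
  rcases le_or_gt D e with hDe | heD
  · have hcoef : 0 ≤ 2 * b / a * e := by positivity
    linarith
  · have hsq : a * D * D ≤ 2 * b * e * D := by nlinarith [mul_le_mul_of_nonneg_left heD.le hb]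
    have hlin : a * D ≤ 2 * b * e := le_of_mul_le_mul_right hsq (he.trans_lt heD)
    have hD : D ≤ 2 * b / a * e := by rw [div_mul_eq_mul_div, le_div_iff₀ ha]; linarith
    linarith

section InnerProductSpace

variable {E : Type*} [NormedAddCommGroup E] [InnerProductSpace ℝ E] {X : Set E}

theorem norm_smul_add_smul_sub_sq {a b : ℝ} (hab : a + b = 1) (x y z : E) :
    ‖a • x + b • y - z‖ ^ 2 = a * ‖x - z‖ ^ 2 + b * ‖y - z‖ ^ 2 - a * b * ‖x - y‖ ^ 2 := by
  obtain rfl : a = 1 - b := eq_sub_of_add_eq hab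
  have hxy : ‖x - y‖ ^ 2 = ‖x - z‖ ^ 2 - 2 * ⟪x - z, y - z⟫ + ‖y - z‖ ^ 2 := by
    rw [← norm_sub_sq_real, sub_sub_sub_cancel_right]
  rw [show (1 - b) • x + b • y - z = (1 - b) • (x - z) + b • (y - z) by module,
    norm_add_sq_real, norm_smul, norm_smul, real_inner_smul_left, real_inner_smul_right,
    Real.norm_eq_abs, Real.norm_eq_abs, mul_pow, mul_pow, sq_abs, sq_abs, hxy]
  ring

theorem strongConvexOn_mul_norm_sub_sq (hX : Convex ℝ X) (m : ℝ) (z : E) :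
    StrongConvexOn X m fun x => m / 2 * ‖x - z‖ ^ 2 := by
  refine ⟨hX, fun x _ y _ a b _ _ hab => le_of_eq ?_⟩
  change m / 2 * ‖a • x + b • y - z‖ ^ 2
    = a * (m / 2 * ‖x - z‖ ^ 2) + b * (m / 2 * ‖y - z‖ ^ 2) - a * b * (m / 2 * ‖x - y‖ ^ 2)
  rw [norm_smul_add_smul_sub_sq hab]
  ring

theorem norm_sub_le_of_isMinOn_prox_of_model {F Fm : E → ℝ} {L lam r : ℝ} {xbar z x₁ xr : E}
    (hF : StrongConvexOn X (-L) F) (hFm : StrongConvexOn X lam Fm)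
    (hup : ∀ x ∈ X, F x - Fm x ≤ (L - lam) / 2 * ‖x - xbar‖ ^ 2)
    (hlow : ∀ x ∈ X, -((lam + L) / 2) * ‖x - xbar‖ ^ 2 ≤ F x - Fm x)
    (hL : 0 ≤ L) (hlam : 0 ≤ lam) (hr : L < r)
    (hx₁ : x₁ ∈ X) (hmin₁ : IsMinOn (fun x => Fm x + r / 2 * ‖x - z‖ ^ 2) X x₁)
    (hxr : xr ∈ X) (hminr : IsMinOn (fun x => F x + r / 2 * ‖x - z‖ ^ 2) X xr) :
    ‖x₁ - xr‖ ≤ (2 * (lam + L) / (r - L) + 1) * ‖xbar - x₁‖ := by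
  set D := ‖x₁ - xr‖
  set e := ‖xbar - x₁‖
  have hgrowthr : F xr + r / 2 * ‖xr - z‖ ^ 2 + (-L + r) / 2 * D ^ 2
      ≤ F x₁ + r / 2 * ‖x₁ - z‖ ^ 2 :=
    (hF.add (strongConvexOn_mul_norm_sub_sq hF.1 r z)).add_mul_norm_sub_sq_le_of_isMinOn
      hxr hminr hx₁
  have hgrowth₁ : Fm x₁ + r / 2 * ‖x₁ - z‖ ^ 2 + (lam + r) / 2 * D ^ 2
      ≤ Fm xr + r / 2 * ‖xr - z‖ ^ 2 := by
    simpa only [D, Pi.add_apply, norm_sub_rev xr x₁] using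
      (hFm.add (strongConvexOn_mul_norm_sub_sq hF.1 r z)).add_mul_norm_sub_sq_le_of_isMinOn
        hx₁ hmin₁ hxr
  have hup₁ : F x₁ - Fm x₁ ≤ (L - lam) / 2 * e ^ 2 := by
    simpa only [e, norm_sub_rev x₁ xbar] using hup x₁ hx₁
  have hlowr : -((lam + L) / 2) * (D + e) ^ 2 ≤ F xr - Fm xr := by
    refine le_trans ?_ (hlow xr hxr)
    have htriangle : ‖xr - xbar‖ ≤ D + e := by
      simpa only [D, e, norm_sub_rev x₁ xr, norm_sub_rev xbar x₁] using
        norm_sub_le_norm_sub_add_norm_sub xr x₁ xbar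
    rw [neg_mul, neg_mul, neg_le_neg_iff]
    gcongr
  have key : (r - L) * D ^ 2 ≤ (lam + L) * D * e + (lam + L) * e ^ 2 := by
    linear_combination hgrowthr + hgrowth₁ + hup₁ + hlowr + lam * sq_nonneg e
  exact le_two_mul_div_add_one_mul_of_mul_sq_le (sub_pos.2 hr) (by positivity) (norm_nonneg _) key

end InnerProductSpace

theorem prox_linear_primal_error_bound_general (n d m : ℕ)
    (X : Set (EuclideanSpace ℝ (Fin n)))
    (h : EuclideanSpace ℝ (Fin d) → EuclideanSpace ℝ (Fin m) → ℝ)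
    (c : EuclideanSpace ℝ (Fin d) → EuclideanSpace ℝ (Fin n) → EuclideanSpace ℝ (Fin m))
    (c' : EuclideanSpace ℝ (Fin d) → EuclideanSpace ℝ (Fin n) →
      (EuclideanSpace ℝ (Fin n) →L[ℝ] EuclideanSpace ℝ (Fin m)))
    (Lh Lc lam r : ℝ)
    (xk zk xk1 xr : EuclideanSpace ℝ (Fin n)) (yk : EuclideanSpace ℝ (Fin d))
    (hXc : Convex ℝ X)
    (hLh : 0 < Lh) (hLc : 0 < Lc) (hlam : 0 < lam)
    (hr : Lh * Lc < r)
    (hconv : ∀ y, ConvexOn ℝ Set.univ (h y))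
    (hlip : ∀ y z z', |h y z - h y z'| ≤ Lh * ‖z - z'‖)
    (hderiv : ∀ y x, HasFDerivAt (c y) (c' y x) x)
    (hjac : ∀ y, ∀ x ∈ X, ∀ x' ∈ X, ‖c' y x - c' y x'‖ ≤ Lc * ‖x - x'‖)
    (hxk : xk ∈ X)
    (hxk1 : xk1 ∈ X)
    (hmin1 : IsMinOn (fun x => h yk (c yk xk + (c' yk xk) (x - xk)) +
      lam / 2 * ‖x - xk‖ ^ 2 + r / 2 * ‖x - zk‖ ^ 2) X xk1)
    (hxr : xr ∈ X)
    (hmin2 : IsMinOn (fun x => h yk (c yk x) + r / 2 * ‖x - zk‖ ^ 2) X xr) :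
    ‖xk1 - xr‖ ≤
      ((2 * (r - Lh * Lc)⁻¹ + (lam + Lh * Lc)⁻¹) / (lam + Lh * Lc)⁻¹) *
        (Real.sqrt (2 * (Lh * Lc) / (lam + Lh * Lc)) + 1) * ‖xk - xk1‖ := by
  have hL : 0 < Lh * Lc := mul_pos hLh hLc
  have hmodel : ∀ w ∈ X, ∀ x ∈ X,
      |h yk (c yk x) - h yk (c yk w + c' yk w (x - w))| ≤ Lh * Lc / 2 * ‖x - w‖ ^ 2 :=
    fun w hw x hx => abs_comp_sub_comp_linearization_le hXc (hlip yk) hLh.le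
      (fun x _ => hderiv yk x) (hjac yk) hw hx
  have hlin : ∀ w, ConvexOn ℝ X fun x => h yk (c yk w + c' yk w (x - w)) := fun w =>
    ((hconv yk).comp_add_apply_sub _ _ w).subset (subset_univ X) hXc
  have hweak : StrongConvexOn X (-(Lh * Lc)) fun x => h yk (c yk x) :=
    strongConvexOn_neg_of_convex_model hXc (fun w _ => hlin w) (fun w _ => by simp)
      fun w hw x hx => by linarith [(abs_le.1 (hmodel w hw x hx)).1]
  have hmodel_strong : StrongConvexOn X lam
      fun x => h yk (c yk xk + c' yk xk (x - xk)) + lam / 2 * ‖x - xk‖ ^ 2 := by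
    have := (strongConvexOn_zero.2 (hlin xk)).add (strongConvexOn_mul_norm_sub_sq hXc lam xk)
    rwa [zero_add] at this
  have hbound := norm_sub_le_of_isMinOn_prox_of_model (xbar := xk) hweak hmodel_strong
    (fun x hx => by linarith [(abs_le.1 (hmodel xk hxk x hx)).2])
    (fun x hx => by linarith [(abs_le.1 (hmodel xk hxk x hx)).1])
    hL.le hlam.le hr hxk1 hmin1 hxr hmin2
  have hconst : (2 * (r - Lh * Lc)⁻¹ + (lam + Lh * Lc)⁻¹) / (lam + Lh * Lc)⁻¹
      = 2 * (lam + Lh * Lc) / (r - Lh * Lc) + 1 := by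
    have hne : r - Lh * Lc ≠ 0 := (sub_pos.2 hr).ne'
    field_simp
  rw [hconst, mul_right_comm]
  refine hbound.trans (le_mul_of_one_le_right (by positivity) ?_)
  linarith [Real.sqrt_nonneg (2 * (Lh * Lc) / (lam + Lh * Lc))]

/-- Lipschitz-type primal error bound for the proximal linear step: the distance from the
prox-linear update `x^{k+1}` to the exact proximal point `x_r(y^k, z^k)` is bounded by
`ζ ‖x^k - x^{k+1}‖` with
`ζ = (2(r-L)⁻¹ + (λ+L)⁻¹)/((λ+L)⁻¹) · (√(2L/(λ+L)) + 1)`, `L = L_h L_c`. -/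
theorem prox_linear_primal_error_bound (n d m : ℕ)
    (X : Set (EuclideanSpace ℝ (Fin n))) (Y : Set (EuclideanSpace ℝ (Fin d)))
    (h : EuclideanSpace ℝ (Fin d) → EuclideanSpace ℝ (Fin m) → ℝ)
    (c : EuclideanSpace ℝ (Fin d) → EuclideanSpace ℝ (Fin n) → EuclideanSpace ℝ (Fin m))
    (c' : EuclideanSpace ℝ (Fin d) → EuclideanSpace ℝ (Fin n) →
      (EuclideanSpace ℝ (Fin n) →L[ℝ] EuclideanSpace ℝ (Fin m)))
    (Lh Lc lam r : ℝ)
    (xk zk xk1 xr : EuclideanSpace ℝ (Fin n)) (yk : EuclideanSpace ℝ (Fin d))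
    (hX : IsClosed X) (hXc : Convex ℝ X)
    (hYcomp : IsCompact Y) (hYc : Convex ℝ Y)
    (hLh : 0 < Lh) (hLc : 0 < Lc) (hlam : 0 < lam)
    (hr : Lh * Lc < r)
    (hconv : ∀ y, ConvexOn ℝ Set.univ (h y))
    (hlip : ∀ y z z', |h y z - h y z'| ≤ Lh * ‖z - z'‖)
    (hderiv : ∀ y x, HasFDerivAt (c y) (c' y x) x)
    (hjac : ∀ y, ∀ x ∈ X, ∀ x' ∈ X, ‖c' y x - c' y x'‖ ≤ Lc * ‖x - x'‖)
    (hconc : ∀ x ∈ X, ConcaveOn ℝ Y (fun y => h y (c y x)))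
    (hcont : ∀ x ∈ X, ContinuousOn (fun y => h y (c y x)) Y)
    (hyk : yk ∈ Y) (hxk : xk ∈ X)
    (hxk1 : xk1 ∈ X)
    (hmin1 : IsMinOn (fun x => h yk (c yk xk + (c' yk xk) (x - xk)) +
      lam / 2 * ‖x - xk‖ ^ 2 + r / 2 * ‖x - zk‖ ^ 2) X xk1)
    (hxr : xr ∈ X)
    (hmin2 : IsMinOn (fun x => h yk (c yk x) + r / 2 * ‖x - zk‖ ^ 2) X xr) :
    ‖xk1 - xr‖ ≤
      ((2 * (r - Lh * Lc)⁻¹ + (lam + Lh * Lc)⁻¹) / (lam + Lh * Lc)⁻¹) *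
        (Real.sqrt (2 * (Lh * Lc) / (lam + Lh * Lc)) + 1) * ‖xk - xk1‖ :=
  prox_linear_primal_error_bound_general n d m X h c c' Lh Lc lam r xk zk xk1 xr yk hXc hLh hLc hlam
    hr hconv hlip hderiv hjac hxk hxk1 hmin1 hxr hmin2
end

section
/- Let F(x, ·) be concave and differentiable on convex compact Y, F(·, y) L-weakly convex on closed convex X, ∇_y F jointly L-Lipschitz, r > L. Define d_r(y, z) = min_{x∈X}{F(x,y) + (r/2)‖x − z‖²}, x_r(y, z) the minimizer, and y₊(z) = proj_Y(y + α∇_y F(x_r(y, z), y)) with α > 0. Let x_r*(z) = argmin_{x∈X} max_{y∈Y}{F(x,y) + (r/2)‖x−z‖²} and y(z) ∈ argmax_{y∈Y} d_r(y, z). Then (r − L)‖x_r*(z) − x_r(y₊(z), z)‖² ≤ (1/α + Lσ₂ + L)·diam(Y)·‖y − y₊(z)‖, where σ₂ = 2(r+L)/(r−L). -/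
open scoped RealInnerProductSpace
open Filter Topology

/-! Each slice `x ↦ F x y + r/2 ‖x - z‖²` and their pointwise supremum `φ` are
`(r - L)`-strongly convex, so comparing the minimizer `xstar` of `φ` with the minimizer
`x_r(y₊)` of the `y₊`-slice bounds `(r - L) ‖xstar - x_r(y₊)‖²` by the dual gap
`φ(x_r(y₊)) - F(x_r(y₊), y₊) - r/2 ‖x_r(y₊) - z‖²`. By concavity this gap is at most
`sup_{w ∈ Y} ⟪∇_y F(x_r(y₊), y₊), w - y₊⟫`. The projection inequality defining `y₊` bounds the
part along `∇_y F(x_r(y), y)` by `‖y - y₊‖ diam Y / α`, and the remaining gradient difference is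
at most `L (σ₂ + 1) ‖y - y₊‖`, since strong convexity in `x` and concavity in `y` make
`y ↦ x_r(y)` `σ₂`-Lipschitz. -/

section Convexity

variable {E : Type*} [NormedAddCommGroup E] [InnerProductSpace ℝ E]

theorem ConcaveOn.le_add_inner_of_hasGradientAt [CompleteSpace E] {s : Set E} {f : E → ℝ}
    {g x y : E} (hf : ConcaveOn ℝ s f) (hg : HasGradientAt f g x) (hx : x ∈ s) (hy : y ∈ s) :
    f y ≤ f x + ⟪g, y - x⟫ := by
  have hline := hf.comp_affineMap (AffineMap.lineMap (k := ℝ) x y)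
  have hderiv : HasDerivAt (f ∘ AffineMap.lineMap (k := ℝ) x y) ⟪g, y - x⟫ 0 := by
    have hg' : HasFDerivAt f (InnerProductSpace.toDual ℝ E g) (AffineMap.lineMap x y (0 : ℝ)) := by
      simpa using hg.hasFDerivAt
    simpa using hg'.comp_hasDerivAt (0 : ℝ) AffineMap.hasDerivAt_lineMap
  have hslope : f y - f x ≤ ⟪g, y - x⟫ := by
    simpa [slope] using
      hline.slope_le_of_hasDerivAt (x := (0 : ℝ)) (y := 1) (by simpa) (by simpa) one_pos hderiv
  linarith

theorem StrongConvexOn.add_sq_norm_sub_le_of_isMinOn {s : Set E} {m : ℝ} {f : E → ℝ}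
    {x₀ x : E} (hf : StrongConvexOn s m f) (hx₀ : x₀ ∈ s) (hmin : IsMinOn f s x₀) (hx : x ∈ s) :
    f x₀ + m / 2 * ‖x - x₀‖ ^ 2 ≤ f x := by
  have hsegment : ∀ t ∈ Set.Ioo (0 : ℝ) 1, f x₀ + (1 - t) * (m / 2 * ‖x - x₀‖ ^ 2) ≤ f x := by
    rintro t ⟨ht₀, ht₁⟩
    have hmem := hf.1 hx hx₀ ht₀.le (sub_nonneg.2 ht₁.le) (add_sub_cancel t 1)
    have hconv := hf.2 hx hx₀ ht₀.le (sub_nonneg.2 ht₁.le) (add_sub_cancel t 1)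
    have hle : f x₀ ≤ f _ := hmin hmem
    simp only [smul_eq_mul] at hconv
    refine le_of_mul_le_mul_left ?_ ht₀
    linarith
  have hlim : Tendsto (fun t : ℝ => f x₀ + (1 - t) * (m / 2 * ‖x - x₀‖ ^ 2)) (𝓝[>] 0)
      (𝓝 (f x₀ + (1 - 0) * (m / 2 * ‖x - x₀‖ ^ 2))) :=
    (Continuous.tendsto (by fun_prop) 0).mono_left nhdsWithin_le_nhds
  simpa using le_of_tendsto hlim (eventually_of_mem (Ioo_mem_nhdsGT one_pos) hsegment)

theorem StrongConvexOn.sq_norm_sub_le_of_isMinOn {s : Set E} {m : ℝ} {f g : E → ℝ} {x₁ x₂ : E}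
    (hf : StrongConvexOn s m f) (hg : StrongConvexOn s m g) (hx₁ : x₁ ∈ s) (hx₂ : x₂ ∈ s)
    (h₁ : IsMinOn f s x₁) (h₂ : IsMinOn g s x₂) :
    m * ‖x₁ - x₂‖ ^ 2 ≤ (f x₂ - g x₂) + (g x₁ - f x₁) := by
  have hf₁ := hf.add_sq_norm_sub_le_of_isMinOn hx₁ h₁ hx₂
  have hg₂ := hg.add_sq_norm_sub_le_of_isMinOn hx₂ h₂ hx₁
  rw [norm_sub_rev] at hf₁
  linarith

theorem UniformConvexOn.of_isLUB {ι : Type*} {s : Set E} {φ : ℝ → ℝ} {I : Set ι}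
    {f : ι → E → ℝ} {g : E → ℝ} (hs : Convex ℝ s) (hf : ∀ i ∈ I, UniformConvexOn s φ (f i))
    (hg : ∀ x ∈ s, IsLUB {t | ∃ i ∈ I, t = f i x} (g x)) : UniformConvexOn s φ g := by
  refine ⟨hs, fun x hx y hy a b ha hb hab => (hg _ (hs hx hy ha hb hab)).2 ?_⟩
  rintro _ ⟨i, hi, rfl⟩
  have hfi := (hf i hi).2 hx hy ha hb hab
  have hx' := (hg x hx).1 ⟨i, hi, rfl⟩
  have hy' := (hg y hy).1 ⟨i, hi, rfl⟩
  simp only [smul_eq_mul] at hfi ⊢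
  nlinarith [mul_le_mul_of_nonneg_left hx' ha, mul_le_mul_of_nonneg_left hy' hb]

theorem ConvexOn.strongConvexOn_add_sq_norm_sub {s : Set E} {f : E → ℝ} {L : ℝ} (r : ℝ) (z : E)
    (hf : ConvexOn ℝ s fun x => f x + L / 2 * ‖x‖ ^ 2) :
    StrongConvexOn s (r - L) fun x => f x + r / 2 * ‖x - z‖ ^ 2 := by
  rw [strongConvexOn_iff_convex]
  have haffine : ConvexOn ℝ s fun x => r / 2 * ‖z‖ ^ 2 - (r • innerₛₗ ℝ z) x :=
    (convexOn_const _ hf.1).sub ((r • innerₛₗ ℝ z).concaveOn hf.1)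
  refine (hf.add haffine).congr fun x _ => ?_
  simp only [Pi.add_apply, LinearMap.smul_apply, innerₛₗ_apply_apply, smul_eq_mul,
    norm_sub_sq_real, real_inner_comm]
  ring

end Convexity

/-- In fact `(r - L) δ ≤ max (r - L) (2 L) η`; `2 (r + L) / (r - L)` is the paper's `σ₂`. -/
theorem le_mul_of_mul_sq_le_mul_add_mul {L r δ η : ℝ} (hL : 0 ≤ L) (hr : L < r) (hδ : 0 ≤ δ)
    (hη : 0 ≤ η) (h : (r - L) * δ ^ 2 ≤ L * (δ + η) * η) : δ ≤ 2 * (r + L) / (r - L) * η := by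
  rw [div_mul_eq_mul_div, le_div_iff₀ (sub_pos.2 hr)]
  rcases le_total δ η with hδη | hηδ
  · nlinarith
  · have hquad : (r - L) * δ ^ 2 ≤ 2 * L * η * δ := by
      nlinarith [mul_le_mul_of_nonneg_left hηδ (mul_nonneg hL hη)]
    rcases hδ.eq_or_lt with rfl | hδ
    · nlinarith
    · have hlin : (r - L) * δ ≤ 2 * L * η := le_of_mul_le_mul_left (by nlinarith) hδ
      nlinarith

section Saddle

variable {E E' : Type*} [NormedAddCommGroup E] [InnerProductSpace ℝ E]
  [NormedAddCommGroup E'] [InnerProductSpace ℝ E']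

theorem real_inner_le_of_inner_add_smul_sub_nonpos {y y' w g g' : E'} {α : ℝ} (hα : 0 < α)
    (hproj : ⟪y + α • g - y', w - y'⟫ ≤ 0) :
    ⟪g', w - y'⟫ ≤ (‖g' - g‖ + ‖y - y'‖ / α) * ‖w - y'‖ := by
  have hsplit : ⟪g', w - y'⟫ = ⟪g' - g, w - y'⟫ + ⟪g, w - y'⟫ := by
    rw [inner_sub_left]; ring
  have hstep : α * ⟪g, w - y'⟫ ≤ ‖y - y'‖ * ‖w - y'‖ := by
    have hcs := real_inner_le_norm (y' - y) (w - y')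
    rw [norm_sub_rev] at hcs
    have : ⟪y + α • g - y', w - y'⟫ = α * ⟪g, w - y'⟫ - ⟪y' - y, w - y'⟫ := by
      rw [show y + α • g - y' = α • g - (y' - y) by abel, inner_sub_left, real_inner_smul_left]
    linarith
  have hgrad : ⟪g, w - y'⟫ ≤ ‖y - y'‖ / α * ‖w - y'‖ := by
    rw [div_mul_eq_mul_div, le_div_iff₀ hα]; linarith
  linarith [real_inner_le_norm (g' - g) (w - y')]

variable [CompleteSpace E']

theorem IsLUB.le_add_mul_diam_of_inner_add_smul_sub_nonpos {Y : Set E'} {f : E' → ℝ}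
    {g g' y y' : E'} {a v α : ℝ} (hα : 0 < α) (hY : Bornology.IsBounded Y)
    (hf : ConcaveOn ℝ Y f) (hg' : HasGradientAt f g' y') (hy' : y' ∈ Y)
    (hproj : ∀ w ∈ Y, ⟪y + α • g - y', w - y'⟫ ≤ 0)
    (hv : IsLUB {s | ∃ w ∈ Y, s = f w + a} v) :
    v ≤ f y' + a + (‖g' - g‖ + ‖y - y'‖ / α) * Metric.diam Y := by
  refine hv.2 ?_
  rintro _ ⟨w, hw, rfl⟩
  have hconc := hf.le_add_inner_of_hasGradientAt hg' hy' hw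
  have hinner := real_inner_le_of_inner_add_smul_sub_nonpos (g' := g') hα (hproj w hw)
  have hdiam : ‖w - y'‖ ≤ Metric.diam Y := by
    rw [← dist_eq_norm]; exact Metric.dist_le_diam_of_mem hY hw hy'
  nlinarith [mul_le_mul_of_nonneg_left hdiam (by positivity : 0 ≤ ‖g' - g‖ + ‖y - y'‖ / α)]

variable {X : Set E} {Y : Set E'} {F : E → E' → ℝ} {G : E → E' → E'} {h : E → ℝ}

theorem mul_sq_norm_sub_le_inner_gradient_of_isMinOn {m : ℝ}
    (hψ : ∀ y ∈ Y, StrongConvexOn X m fun x => F x y + h x)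
    (hconc : ∀ x ∈ X, ConcaveOn ℝ Y (F x)) (hG : ∀ x y, HasGradientAt (F x) (G x y) y)
    {x₁ x₂ : E} {y₁ y₂ : E'} (hx₁ : x₁ ∈ X) (hx₂ : x₂ ∈ X) (hy₁ : y₁ ∈ Y) (hy₂ : y₂ ∈ Y)
    (h₁ : IsMinOn (fun x => F x y₁ + h x) X x₁) (h₂ : IsMinOn (fun x => F x y₂ + h x) X x₂) :
    m * ‖x₁ - x₂‖ ^ 2 ≤ ⟪G x₁ y₁ - G x₂ y₂, y₂ - y₁⟫ := by
  have hgap := (hψ y₁ hy₁).sq_norm_sub_le_of_isMinOn (hψ y₂ hy₂) hx₁ hx₂ h₁ h₂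
  have hc₁ := (hconc x₁ hx₁).le_add_inner_of_hasGradientAt (hG x₁ y₁) hy₁ hy₂
  have hc₂ := (hconc x₂ hx₂).le_add_inner_of_hasGradientAt (hG x₂ y₂) hy₂ hy₁
  have hinner : ⟪G x₁ y₁ - G x₂ y₂, y₂ - y₁⟫ = ⟪G x₁ y₁, y₂ - y₁⟫ + ⟪G x₂ y₂, y₁ - y₂⟫ := by
    rw [inner_sub_left, ← neg_sub y₂ y₁, inner_neg_right]; ring
  linarith

theorem norm_gradient_sub_le_of_isMinOn {L r : ℝ} {xr : E' → E} (hr : L < r)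
    (hψ : ∀ y ∈ Y, StrongConvexOn X (r - L) fun x => F x y + h x)
    (hconc : ∀ x ∈ X, ConcaveOn ℝ Y (F x)) (hG : ∀ x y, HasGradientAt (F x) (G x y) y)
    (hlip : ∀ x x' y y', ‖G x y - G x' y'‖ ≤ L * √(‖x - x'‖ ^ 2 + ‖y - y'‖ ^ 2))
    (hxr : ∀ y ∈ Y, xr y ∈ X ∧ IsMinOn (fun x => F x y + h x) X (xr y))
    {y₁ y₂ : E'} (hy₁ : y₁ ∈ Y) (hy₂ : y₂ ∈ Y) :
    ‖G (xr y₁) y₁ - G (xr y₂) y₂‖ ≤ (L * (2 * (r + L) / (r - L)) + L) * ‖y₁ - y₂‖ := by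
  rcases eq_or_ne y₁ y₂ with rfl | hne
  · simp
  have hη : 0 < ‖y₁ - y₂‖ := norm_pos_iff.2 (sub_ne_zero.2 hne)
  have hL : 0 ≤ L := by
    have hdiag := hlip (xr y₁) (xr y₁) y₁ y₂
    rw [sub_self, norm_zero, zero_pow two_ne_zero, zero_add, Real.sqrt_sq hη.le] at hdiag
    exact nonneg_of_mul_nonneg_left ((norm_nonneg _).trans hdiag) hη
  have hΔ : ‖G (xr y₁) y₁ - G (xr y₂) y₂‖ ≤ L * (‖xr y₁ - xr y₂‖ + ‖y₁ - y₂‖) := by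
    refine (hlip _ _ _ _).trans (mul_le_mul_of_nonneg_left ?_ hL)
    exact Real.sqrt_le_iff.2 ⟨by positivity, by nlinarith [norm_nonneg (xr y₁ - xr y₂)]⟩
  have hquad : (r - L) * ‖xr y₁ - xr y₂‖ ^ 2 ≤
      L * (‖xr y₁ - xr y₂‖ + ‖y₁ - y₂‖) * ‖y₁ - y₂‖ := by
    calc (r - L) * ‖xr y₁ - xr y₂‖ ^ 2
        ≤ ⟪G (xr y₁) y₁ - G (xr y₂) y₂, y₂ - y₁⟫ :=
          mul_sq_norm_sub_le_inner_gradient_of_isMinOn hψ hconc hG (hxr y₁ hy₁).1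
            (hxr y₂ hy₂).1 hy₁ hy₂ (hxr y₁ hy₁).2 (hxr y₂ hy₂).2
      _ ≤ ‖G (xr y₁) y₁ - G (xr y₂) y₂‖ * ‖y₁ - y₂‖ := by
          rw [norm_sub_rev y₁ y₂]; exact real_inner_le_norm _ _
      _ ≤ _ := by gcongr
  have hδ := le_mul_of_mul_sq_le_mul_add_mul hL hr (norm_nonneg _) hη.le hquad
  calc ‖G (xr y₁) y₁ - G (xr y₂) y₂‖ ≤ L * (‖xr y₁ - xr y₂‖ + ‖y₁ - y₂‖) := hΔ
    _ ≤ L * (2 * (r + L) / (r - L) * ‖y₁ - y₂‖ + ‖y₁ - y₂‖) := by gcongr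
    _ = _ := by ring

end Saddle

theorem dual_error_bound_concave_general (n d : ℕ)
    (X : Set (EuclideanSpace ℝ (Fin n))) (Y : Set (EuclideanSpace ℝ (Fin d)))
    (F : EuclideanSpace ℝ (Fin n) → EuclideanSpace ℝ (Fin d) → ℝ)
    (Gy : EuclideanSpace ℝ (Fin n) → EuclideanSpace ℝ (Fin d) → EuclideanSpace ℝ (Fin d))
    (L r α : ℝ) (z : EuclideanSpace ℝ (Fin n)) (y : EuclideanSpace ℝ (Fin d))
    (xr : EuclideanSpace ℝ (Fin d) → EuclideanSpace ℝ (Fin n))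
    (yplus : EuclideanSpace ℝ (Fin d))
    (xstar : EuclideanSpace ℝ (Fin n))
    (φ : EuclideanSpace ℝ (Fin n) → ℝ)
    (hXc : Convex ℝ X)
    (hYcomp : IsCompact Y)
    (hr : L < r) (hα : 0 < α)
    (hwc : ∀ y' ∈ Y, ConvexOn ℝ X (fun x => F x y' + L / 2 * ‖x‖ ^ 2))
    (hconc : ∀ x ∈ X, ConcaveOn ℝ Y (fun y' => F x y'))
    (hgrad : ∀ x y', HasGradientAt (F x) (Gy x y') y')
    (hlip : ∀ x x' y' y'', ‖Gy x y' - Gy x' y''‖ ≤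
      L * Real.sqrt (‖x - x'‖ ^ 2 + ‖y' - y''‖ ^ 2))
    (hxr : ∀ y' ∈ Y, xr y' ∈ X ∧
      IsMinOn (fun x => F x y' + r / 2 * ‖x - z‖ ^ 2) X (xr y'))
    (hy : y ∈ Y)
    (hyplus : yplus ∈ Y ∧ ∀ w ∈ Y, ⟪y + α • Gy (xr y) y - yplus, w - yplus⟫ ≤ 0)
    (hφ : ∀ x ∈ X, IsLUB {s | ∃ y' ∈ Y, s = F x y' + r / 2 * ‖x - z‖ ^ 2} (φ x))
    (hxstar : xstar ∈ X ∧ IsMinOn φ X xstar) :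
    (r - L) * ‖xstar - xr yplus‖ ^ 2 ≤
      (1 / α + L * (2 * (r + L) / (r - L)) + L) * Metric.diam Y * ‖y - yplus‖ := by
  obtain ⟨hyplusY, hproj⟩ := hyplus
  obtain ⟨hxstarX, hxstarmin⟩ := hxstar
  obtain ⟨hxhatX, hxhatmin⟩ := hxr yplus hyplusY
  have hψ : ∀ y' ∈ Y, StrongConvexOn X (r - L) fun x => F x y' + r / 2 * ‖x - z‖ ^ 2 :=
    fun y' hy' => (hwc y' hy').strongConvexOn_add_sq_norm_sub r z
  have hgap := (hψ yplus hyplusY).sq_norm_sub_le_of_isMinOn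
    (UniformConvexOn.of_isLUB hXc hψ hφ) hxhatX hxstarX hxhatmin hxstarmin
  have hψ_le_φ : F xstar yplus + r / 2 * ‖xstar - z‖ ^ 2 ≤ φ xstar :=
    (hφ xstar hxstarX).1 ⟨yplus, hyplusY, rfl⟩
  have hsup := (hφ _ hxhatX).le_add_mul_diam_of_inner_add_smul_sub_nonpos hα
    hYcomp.isBounded (hconc _ hxhatX) (hgrad _ yplus) hyplusY hproj
  have hΔ := norm_gradient_sub_le_of_isMinOn hr hψ hconc hgrad hlip hxr hyplusY hy
  rw [norm_sub_rev yplus y] at hΔ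
  calc (r - L) * ‖xstar - xr yplus‖ ^ 2
      ≤ (‖Gy (xr yplus) yplus - Gy (xr y) y‖ + ‖y - yplus‖ / α) * Metric.diam Y := by
        rw [norm_sub_rev]; linarith
    _ ≤ ((L * (2 * (r + L) / (r - L)) + L) * ‖y - yplus‖ + ‖y - yplus‖ / α) *
          Metric.diam Y := by
        gcongr
    _ = _ := by ring

/-- Dual error bound for the general concave case:
`(r-L)‖x_r*(z) - x_r(y₊(z),z)‖² ≤ (1/α + Lσ₂ + L)·diam(Y)·‖y - y₊(z)‖`,
with `σ₂ = 2(r+L)/(r-L)`. -/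
theorem dual_error_bound_concave (n d : ℕ)
    (X : Set (EuclideanSpace ℝ (Fin n))) (Y : Set (EuclideanSpace ℝ (Fin d)))
    (F : EuclideanSpace ℝ (Fin n) → EuclideanSpace ℝ (Fin d) → ℝ)
    (Gy : EuclideanSpace ℝ (Fin n) → EuclideanSpace ℝ (Fin d) → EuclideanSpace ℝ (Fin d))
    (L r α : ℝ) (z : EuclideanSpace ℝ (Fin n)) (y : EuclideanSpace ℝ (Fin d))
    (xr : EuclideanSpace ℝ (Fin d) → EuclideanSpace ℝ (Fin n))
    (yplus ybar : EuclideanSpace ℝ (Fin d))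
    (xstar : EuclideanSpace ℝ (Fin n))
    (φ : EuclideanSpace ℝ (Fin n) → ℝ)
    (hX : IsClosed X) (hXc : Convex ℝ X)
    (hYcomp : IsCompact Y) (hYc : Convex ℝ Y)
    (hr : L < r) (hα : 0 < α)
    (hwc : ∀ y' ∈ Y, ConvexOn ℝ X (fun x => F x y' + L / 2 * ‖x‖ ^ 2))
    (hconc : ∀ x ∈ X, ConcaveOn ℝ Y (fun y' => F x y'))
    (hgrad : ∀ x y', HasGradientAt (F x) (Gy x y') y')
    (hlip : ∀ x x' y' y'', ‖Gy x y' - Gy x' y''‖ ≤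
      L * Real.sqrt (‖x - x'‖ ^ 2 + ‖y' - y''‖ ^ 2))
    (hxr : ∀ y' ∈ Y, xr y' ∈ X ∧
      IsMinOn (fun x => F x y' + r / 2 * ‖x - z‖ ^ 2) X (xr y'))
    (hybar : ybar ∈ Y ∧ ∀ y' ∈ Y,
      F (xr y') y' + r / 2 * ‖xr y' - z‖ ^ 2 ≤ F (xr ybar) ybar + r / 2 * ‖xr ybar - z‖ ^ 2)
    (hy : y ∈ Y)
    (hyplus : yplus ∈ Y ∧ ∀ w ∈ Y, ⟪y + α • Gy (xr y) y - yplus, w - yplus⟫ ≤ 0)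
    (hφ : ∀ x ∈ X, IsLUB {s | ∃ y' ∈ Y, s = F x y' + r / 2 * ‖x - z‖ ^ 2} (φ x))
    (hxstar : xstar ∈ X ∧ IsMinOn φ X xstar) :
    (r - L) * ‖xstar - xr yplus‖ ^ 2 ≤
      (1 / α + L * (2 * (r + L) / (r - L)) + L) * Metric.diam Y * ‖y - yplus‖ :=
  dual_error_bound_concave_general n d X Y F Gy L r α z y xr yplus xstar φ hXc hYcomp hr hα hwc
    hconc hgrad hlip hxr hy hyplus hφ hxstar
end

section
/- Suppose F(·, y) is L-weakly convex on closed convex X and F(x, ·) is concave on convex Y, r > L. Define F_r(x,y,z) = F(x,y) + (r/2)‖x−z‖², d_r(y,z) = min_{x∈X} F_r(x,y,z), p_r(z) = min_{x∈X} max_{y∈Y} F_r(x,y,z), and x_r(y,z) the primal minimizer. Then for any z, z′ and any ȳ ∈ argmax_{y∈Y} d_r(y, z′): p_r(z′) − p_r(z) ≤ (r/2)⟨z′ − z, z′ + z − 2 x_r(ȳ, z)⟩. -/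
open scoped RealInnerProductSpace
open Filter Topology

set_option maxHeartbeats 1000000

private lemma pd_half_norm_sq {m : ℕ} (a b : EuclideanSpace ℝ (Fin m)) :
    ‖(1/2:ℝ) • a + (1/2:ℝ) • b‖ ^ 2 = (‖a‖^2 + ‖b‖^2)/2 - ‖a - b‖^2/4 := by
  have h := parallelogram_law_with_norm ℝ a b
  have h2 : (1/2:ℝ) • a + (1/2:ℝ) • b = (1/2:ℝ) • (a + b) := by rw [smul_add]
  rw [h2, norm_smul]
  simp only [norm_div, norm_one, Real.norm_ofNat]
  nlinarith [h]

private lemma pd_inner_key {m : ℕ} (a b : EuclideanSpace ℝ (Fin m)) :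
    ⟪a - b, a + b⟫ = ‖a‖^2 - ‖b‖^2 := by
  rw [inner_sub_left, inner_add_right, inner_add_right, real_inner_self_eq_norm_sq,
    real_inner_self_eq_norm_sq, real_inner_comm a b]
  ring

/-- Proximal descent inequality: for `ȳ ∈ argmax_{y ∈ Y} d_r(y, z')`,
`p_r(z') - p_r(z) ≤ (r/2)⟨z' - z, z' + z - 2 x_r(ȳ, z)⟩`. -/
theorem proximal_descent_inequality (n d : ℕ)
    (X : Set (EuclideanSpace ℝ (Fin n))) (Y : Set (EuclideanSpace ℝ (Fin d)))
    (F : EuclideanSpace ℝ (Fin n) → EuclideanSpace ℝ (Fin d) → ℝ)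
    (L r : ℝ) (z z' : EuclideanSpace ℝ (Fin n))
    (φz φz' : EuclideanSpace ℝ (Fin n) → ℝ)
    (xsz xsz' : EuclideanSpace ℝ (Fin n))
    (xr' : EuclideanSpace ℝ (Fin d) → EuclideanSpace ℝ (Fin n))
    (ybar : EuclideanSpace ℝ (Fin d)) (xb : EuclideanSpace ℝ (Fin n))
    (hX : IsClosed X) (hXc : Convex ℝ X)
    (hYcomp : IsCompact Y) (hYc : Convex ℝ Y)
    (hr : L < r)
    (hwc : ∀ y ∈ Y, ConvexOn ℝ X (fun x => F x y + L / 2 * ‖x‖ ^ 2))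
    (hconc : ∀ x ∈ X, ConcaveOn ℝ Y (fun y => F x y))
    (hcont : Continuous fun p : EuclideanSpace ℝ (Fin n) × EuclideanSpace ℝ (Fin d) =>
      F p.1 p.2)
    -- p_r(z) = min_X max_Y F_r(·,·,z), attained at xsz
    (hφz : ∀ x ∈ X, IsLUB {s | ∃ y ∈ Y, s = F x y + r / 2 * ‖x - z‖ ^ 2} (φz x))
    (hxsz : xsz ∈ X ∧ IsMinOn φz X xsz)
    -- p_r(z') = min_X max_Y F_r(·,·,z'), attained at xsz'
    (hφz' : ∀ x ∈ X, IsLUB {s | ∃ y ∈ Y, s = F x y + r / 2 * ‖x - z'‖ ^ 2} (φz' x))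
    (hxsz' : xsz' ∈ X ∧ IsMinOn φz' X xsz')
    -- x_r(y, z') for all y ∈ Y, defining d_r(·, z')
    (hxr' : ∀ y ∈ Y, xr' y ∈ X ∧
      IsMinOn (fun x => F x y + r / 2 * ‖x - z'‖ ^ 2) X (xr' y))
    -- ȳ maximizes d_r(·, z') over Y
    (hybar : ybar ∈ Y ∧ ∀ y ∈ Y,
      F (xr' y) y + r / 2 * ‖xr' y - z'‖ ^ 2 ≤ F (xr' ybar) ybar + r / 2 * ‖xr' ybar - z'‖ ^ 2)
    -- xb = x_r(ȳ, z)
    (hxb : xb ∈ X ∧ IsMinOn (fun x => F x ybar + r / 2 * ‖x - z‖ ^ 2) X xb) :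
    φz' xsz' - φz xsz ≤ r / 2 * ⟪z' - z, z' + z - 2 • xb⟫ := by
  have hc : (0:ℝ) < r - L := by linarith
  set xs : EuclideanSpace ℝ (Fin n) := xr' ybar with hxs_def
  have hxsX : xs ∈ X := (hxr' ybar hybar.1).1
  set D : ℝ := F xs ybar + r / 2 * ‖xs - z'‖ ^ 2 with hD_def
  -- Strong convexity of F_r(·, ybar, z') around its minimizer xs
  have hstrong : ∀ x ∈ X,
      D + (r - L)/4 * ‖x - xs‖^2 ≤ F x ybar + r / 2 * ‖x - z'‖ ^ 2 := by
    intro x hx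
    set mp : EuclideanSpace ℝ (Fin n) := (1/2:ℝ) • x + (1/2:ℝ) • xs with hmp_def
    have hmpX : mp ∈ X := hXc hx hxsX (by norm_num) (by norm_num) (by norm_num)
    have hconv : F mp ybar + L / 2 * ‖mp‖ ^ 2 ≤
        1/2 * (F x ybar + L / 2 * ‖x‖ ^ 2) + 1/2 * (F xs ybar + L / 2 * ‖xs‖ ^ 2) := by
      have h := (hwc ybar hybar.1).2 hx hxsX (by norm_num : (0:ℝ) ≤ 1/2)
        (by norm_num : (0:ℝ) ≤ 1/2) (by norm_num : (1:ℝ)/2 + 1/2 = 1)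
      simp only [smul_eq_mul] at h
      rw [hmp_def]
      exact h
    have hq1 : ‖mp‖^2 = (‖x‖^2 + ‖xs‖^2)/2 - ‖x - xs‖^2/4 := pd_half_norm_sq x xs
    have hq2 : ‖mp - z'‖^2 = (‖x - z'‖^2 + ‖xs - z'‖^2)/2 - ‖x - xs‖^2/4 := by
      have hrw : mp - z' = (1/2:ℝ) • (x - z') + (1/2:ℝ) • (xs - z') := by
        rw [hmp_def]; module
      rw [hrw]
      have := pd_half_norm_sq (x - z') (xs - z')
      rwa [sub_sub_sub_cancel_right] at this
    have hmin : F xs ybar + r / 2 * ‖xs - z'‖ ^ 2 ≤ F mp ybar + r / 2 * ‖mp - z'‖ ^ 2 :=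
      (hxr' ybar hybar.1).2 hmpX
    rw [hq1] at hconv
    rw [hq2] at hmin
    rw [hD_def]
    linarith [hconv, hmin]
  -- Main claim : F_r(xs, y, z') ≤ D for all y ∈ Y
  have hAbove : ∀ y ∈ Y, F xs y + r / 2 * ‖xs - z'‖ ^ 2 ≤ D := by
    intro y hy
    set m : ℝ := F (xr' y) y + r / 2 * ‖xr' y - z'‖ ^ 2 with hm_def
    have hDm : m ≤ D := hybar.2 y hy
    set K : ℝ := 4 * (D - m) / (r - L) with hK_def
    set w : ℕ → EuclideanSpace ℝ (Fin n) :=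
      fun k => xr' ((1 - 1/((k:ℝ)+2)) • ybar + (1/((k:ℝ)+2)) • y) with hw_def
    have hk : ∀ k : ℕ, ‖w k - xs‖^2 ≤ K/((k:ℝ)+1) ∧
        F (w k) y + r / 2 * ‖w k - z'‖ ^ 2 ≤ D := by
      intro k
      set t : ℝ := 1/((k:ℝ)+2) with ht_def
      have hk2 : (0:ℝ) < (k:ℝ)+2 := by positivity
      have hk1 : (0:ℝ) < (k:ℝ)+1 := by positivity
      have ht0 : 0 < t := by positivity
      have ht1 : t < 1 := by
        rw [ht_def, div_lt_one hk2]; linarith [Nat.cast_nonneg (α := ℝ) k]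
      set yt : EuclideanSpace ℝ (Fin d) := (1 - t) • ybar + t • y with hyt_def
      have hytY : yt ∈ Y := hYc hybar.1 hy
        (by linarith : (0:ℝ) ≤ 1 - t) ht0.le (by ring : (1 - t) + t = 1)
      have hwkX : w k ∈ X := (hxr' yt hytY).1
      have f1 : (1 - t) * F (w k) ybar + t * F (w k) y + r / 2 * ‖w k - z'‖ ^ 2 ≤ D := by
        have hcc : (1 - t) * F (w k) ybar + t * F (w k) y ≤ F (w k) yt := by
          have h := (hconc (w k) hwkX).2 hybar.1 hy
            (by linarith : (0:ℝ) ≤ 1 - t) ht0.le (by ring : (1 - t) + t = 1)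
          simp only [smul_eq_mul] at h
          rw [hyt_def]
          exact h
        have hii : F (w k) yt + r / 2 * ‖w k - z'‖ ^ 2 ≤ D := hybar.2 yt hytY
        linarith
      have f2 : D + (r - L)/4 * ‖w k - xs‖^2 ≤ F (w k) ybar + r / 2 * ‖w k - z'‖ ^ 2 :=
        hstrong (w k) hwkX
      have f3 : m ≤ F (w k) y + r / 2 * ‖w k - z'‖ ^ 2 := (hxr' y hy).2 hwkX
      have hs0 : (0:ℝ) ≤ ‖w k - xs‖^2 := sq_nonneg _
      have g2 := mul_le_mul_of_nonneg_left f2 (by linarith : (0:ℝ) ≤ 1 - t)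
      have g3 := mul_le_mul_of_nonneg_left f3 ht0.le
      have hs0c : (0:ℝ) ≤ (1 - t) * ((r - L)/4 * ‖w k - xs‖^2) := by
        apply mul_nonneg (by linarith)
        exact mul_nonneg (by linarith) hs0
      constructor
      · have hkey : (1 - t) * ((r - L)/4 * ‖w k - xs‖^2) ≤ t * (D - m) := by
          nlinarith [f1, g2, g3]
        have e1 : ((k:ℝ)+2) * (1 - t) = (k:ℝ)+1 := by
          rw [ht_def]; field_simp; ring
        have e2 : ((k:ℝ)+2) * t = 1 := by
          rw [ht_def]; field_simp
        have hkey2 : ((k:ℝ)+1) * ((r - L)/4 * ‖w k - xs‖^2) ≤ 1 * (D - m) := by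
          calc ((k:ℝ)+1) * ((r - L)/4 * ‖w k - xs‖^2)
              = (((k:ℝ)+2) * (1 - t)) * ((r - L)/4 * ‖w k - xs‖^2) := by rw [e1]
            _ = ((k:ℝ)+2) * ((1 - t) * ((r - L)/4 * ‖w k - xs‖^2)) := by ring
            _ ≤ ((k:ℝ)+2) * (t * (D - m)) := mul_le_mul_of_nonneg_left hkey hk2.le
            _ = (((k:ℝ)+2) * t) * (D - m) := by ring
            _ = 1 * (D - m) := by rw [e2]
        rw [le_div_iff₀ hk1, hK_def, le_div_iff₀ hc]
        have haux : ∀ kk s Dm rL : ℝ, (kk+1) * (rL/4 * s) ≤ 1 * Dm →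
            s * (kk+1) * rL ≤ 4 * Dm := by intro kk s Dm rL h; linarith
        exact haux (k:ℝ) (‖w k - xs‖^2) (D - m) (r - L) hkey2
      · have htb : t * (F (w k) y + r / 2 * ‖w k - z'‖ ^ 2) ≤ t * D := by
          nlinarith [f1, g2, hs0c]
        exact le_of_mul_le_mul_left htb ht0
    -- limits
    have hK0 : Tendsto (fun k : ℕ => K / ((k:ℝ)+1)) atTop (𝓝 0) := by
      simpa [div_eq_mul_inv, one_div] using tendsto_one_div_add_atTop_nhds_zero_nat.const_mul K
    have hsq : Tendsto (fun k => ‖w k - xs‖^2) atTop (𝓝 0) :=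
      squeeze_zero (fun k => by positivity) (fun k => (hk k).1) hK0
    have hnrm : Tendsto (fun k => ‖w k - xs‖) atTop (𝓝 0) := by
      have h := (Real.continuous_sqrt.tendsto 0).comp hsq
      simp only [Real.sqrt_zero] at h
      have he : (fun k => Real.sqrt (‖w k - xs‖^2)) = fun k => ‖w k - xs‖ :=
        funext fun k => Real.sqrt_sq (norm_nonneg _)
      rwa [Function.comp_def, he] at h
    have htend : Tendsto w atTop (𝓝 xs) := tendsto_iff_norm_sub_tendsto_zero.mpr hnrm
    have hF1 : Continuous fun x : EuclideanSpace ℝ (Fin n) => F x y :=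
      hcont.comp (Continuous.prodMk continuous_id continuous_const)
    have hF2 : Continuous fun x : EuclideanSpace ℝ (Fin n) => ‖x - z'‖^2 :=
      ((continuous_id.sub continuous_const).norm).pow 2
    have hFc : Continuous fun x : EuclideanSpace ℝ (Fin n) =>
        F x y + r / 2 * ‖x - z'‖ ^ 2 := hF1.add (continuous_const.mul hF2)
    have hlim : Tendsto (fun k => F (w k) y + r / 2 * ‖w k - z'‖ ^ 2) atTop
        (𝓝 (F xs y + r / 2 * ‖xs - z'‖ ^ 2)) := (hFc.tendsto xs).comp htend
    exact le_of_tendsto hlim (Eventually.of_forall fun k => (hk k).2)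
  -- p_r(z') ≤ D
  have hφxs : φz' xs ≤ D := by
    refine (hφz' xs hxsX).2 ?_
    rintro s ⟨y, hy, rfl⟩
    exact hAbove y hy
  have hup : φz' xsz' ≤ D := le_trans (hxsz'.2 hxsX) hφxs
  -- lower bound on p_r(z)
  have hlow : F xb ybar + r / 2 * ‖xb - z‖ ^ 2 ≤ φz xsz :=
    le_trans (hxb.2 hxsz.1) ((hφz xsz hxsz.1).1 ⟨ybar, hybar.1, rfl⟩)
  have hDb : D ≤ F xb ybar + r / 2 * ‖xb - z'‖ ^ 2 := (hxr' ybar hybar.1).2 hxb.1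
  -- inner product identity
  have hinner : ⟪z' - z, z' + z - 2 • xb⟫ = ‖xb - z'‖^2 - ‖xb - z‖^2 := by
    have h := pd_inner_key (xb - z') (xb - z)
    have h1 : (xb - z') - (xb - z) = -(z' - z) := by abel
    have h2 : (xb - z') + (xb - z) = -(z' + z - 2 • xb) := by abel
    rw [h1, h2, inner_neg_neg] at h
    linarith
  rw [hinner]
  have hfin : ∀ p' p D' Fb A B : ℝ, p' ≤ D' → D' ≤ Fb + r / 2 * A →
      Fb + r / 2 * B ≤ p → p' - p ≤ r / 2 * (A - B) := by
    intro p' p D' Fb A B h1 h2 h3; linarith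
  exact hfin _ _ _ _ _ _ hup hDb hlow
end
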